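/- Let G be a group regarded as a one-object category and let g, h be non-identity elements of G. In the category D_G: (i) if g ≠ h there are no morphisms from the object [g] to the object [h]; (ii) the only endomorphism of the object [g] is its identity; (iii) there are no morphisms from the object [g] to the object given by the identity morphism of the unique object; and (iv) the only endomorphism of the identity object is its identity. -/

import Mathlib

/-!
The pushout `F_≃(G)` is the one-object category of the free monoid on `G ∖ {1}`: its universal
property yields a functor `d` into that monoid sending `[g]` to the letter `g`, while evaluating
words on free arrows gives a functor back whose composite with `d` is the identity by uniqueness,
so `d` is faithful. A morphism of `D_G` between two endomorphisms `a, b` of the single object is a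
factorisation `b = u ≫ a ≫ v`; applying `d` and counting word lengths forces `d u = d v = 1`
whenever `b` is not longer than `a`, hence `u = v = 𝟙` and `b = a`. A factorisation of `𝟙` through
`[g]` would make the empty word at least as long as a letter.
-/

open CategoryTheory

universe u

namespace Unrolling

/-- A morphism is "an identity" if it is the `eqToHom` of an equality of objects. -/
def IsIdArrow {C : Type*} [Category C] {x y : C} (m : x ⟶ y) : Prop :=
  ∃ h : x = y, m = eqToHom h

/-- A morphism lies in the image of the functor `F` (up to the evident equalities of objects). -/
def InImg {A C : Type*} [Category A] [Category C] (F : A ⥤ C) {x y : C} (m : x ⟶ y) : Prop :=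
  ∃ (a b : A) (k : a ⟶ b) (ha : F.obj a = x) (hb : F.obj b = y),
    m = eqToHom ha.symm ≫ F.map k ≫ eqToHom hb

/-- The free category comonad applied to a functor `c : A ⥤ B`, i.e. the induced functor
between path categories. -/
def freeMap {A B : Type*} [Category A] [Category B] (c : A ⥤ B) : Paths A ⥤ Paths B where
  obj x := c.obj x
  map f := c.toPrefunctor.mapPath f
  map_id _ := rfl
  map_comp f g := c.toPrefunctor.mapPath_comp f g

/-- A "free isomorphism": the image under `i : Paths R ⥤ F_≃(R)` of a length-one path whose
arrow is an isomorphism of `R`. -/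
def FreeIso {R Fs : Type*} [Category R] [Category Fs] (i : Paths R ⥤ Fs)
    {x y : Fs} (m : x ⟶ y) : Prop :=
  ∃ (a b : R) (f : a ⟶ b) (ha : i.obj ((Paths.of R).obj a) = x) (hb : i.obj ((Paths.of R).obj b) = y),
    IsIso f ∧ m = eqToHom ha.symm ≫ i.map ((Paths.of R).map f) ≫ eqToHom hb

/-- The twisted arrow category of `C`: objects are morphisms of `C`. -/
structure Tw (C : Type*) [Category C] where
  left : C
  right : C
  hom : left ⟶ right

/-- Morphisms `f → f'` in the twisted arrow category: pairs `(u, v)` with `f' = u ≫ f ≫ v`. -/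
@[ext]
structure TwHom {C : Type*} [Category C] (X Y : Tw C) where
  u : Y.left ⟶ X.left
  v : X.right ⟶ Y.right
  w : Y.hom = u ≫ X.hom ≫ v

instance {C : Type*} [Category C] : Category (Tw C) where
  Hom := TwHom
  id X := ⟨𝟙 _, 𝟙 _, by simp⟩
  comp {X Y Z} f g := ⟨g.u ≫ f.u, f.v ≫ g.v, by rw [g.w, f.w]; simp⟩
  id_comp f := by apply TwHom.ext <;> simp [CategoryStruct.id, CategoryStruct.comp]
  comp_id f := by apply TwHom.ext <;> simp [CategoryStruct.id, CategoryStruct.comp]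
  assoc f g h := by apply TwHom.ext <;> simp [CategoryStruct.comp]

/-- The defining property of the objects of `D_R` inside the twisted arrow category of
`F_≃(R)`. -/
def InD {R₀ R Fs : Type*} [Category R₀] [Category R] [Category Fs]
    (i₀ : R₀ ⥤ Fs) (i : Paths R ⥤ Fs) (X : Tw Fs) : Prop :=
  ∃ (z : Fs) (g : X.left ⟶ z) (h : z ⟶ X.right),
    X.hom = g ≫ h ∧ (IsIdArrow g ∨ InImg i₀ g) ∧ (IsIdArrow h ∨ FreeIso i h)

/-- The category `D_R`, a full subcategory of the twisted arrow category of `F_≃(R)`. -/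
abbrev DR {R₀ R Fs : Type*} [Category R₀] [Category R] [Category Fs]
    (i₀ : R₀ ⥤ Fs) (i : Paths R ⥤ Fs) := ObjectProperty.FullSubcategory (InD i₀ i)

variable (G : Type) [Group G] {Fs : Type} [SmallCategory Fs]

/-- The unique functor from the terminal category to the one-object category on `G`. -/
def cG : Discrete PUnit.{1} ⥤ SingleObj G := (Functor.const _).obj (SingleObj.star G)

/-- The image in `F_≃(G)` of the length-one path on the arrow `g : G`. -/
def freeArrow (i : Paths (SingleObj G) ⥤ Fs) (g : G) :
    i.obj ((Paths.of (SingleObj G)).obj (SingleObj.star G)) ⟶ i.obj ((Paths.of (SingleObj G)).obj (SingleObj.star G)) :=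
  i.map ((Paths.of (SingleObj G)).map (SingleObj.toEnd G g))

/-- The object of `D_G` given by the identity morphism of the unique object of `F_≃(G)`. -/
def idObj (i₀ : Discrete PUnit.{1} ⥤ Fs) (i : Paths (SingleObj G) ⥤ Fs) : DR i₀ i :=
  ⟨⟨_, _, 𝟙 (i.obj ((Paths.of (SingleObj G)).obj (SingleObj.star G)))⟩,
    ⟨_, 𝟙 _, 𝟙 _, by simp, Or.inl ⟨rfl, rfl⟩, Or.inl ⟨rfl, rfl⟩⟩⟩

/-- The object of `D_G` given by the free isomorphism `[g]`. -/
def freeObj (i₀ : Discrete PUnit.{1} ⥤ Fs) (i : Paths (SingleObj G) ⥤ Fs) (g : G) : DR i₀ i :=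
  ⟨⟨_, _, freeArrow G i g⟩,
    ⟨_, 𝟙 _, freeArrow G i g, by simp,
      Or.inl ⟨rfl, rfl⟩,
      Or.inr ⟨SingleObj.star G, SingleObj.star G, SingleObj.toEnd G g, rfl, rfl,
        inferInstance, by simp [freeArrow]⟩⟩⟩

section Pushout

variable {A B C : Type*} [Category A] [Category B] [Category C] {P : Type} [SmallCategory P]
  {f : C ⥤ A} {g : C ⥤ B} {i₀ : A ⥤ P} {i : B ⥤ P}

theorem pushout_functor_ext (hcomm : f ⋙ i₀ = g ⋙ i)
    (huniv : ∀ (T : Cat.{0, 0}) (q₀ : A ⥤ T) (q : B ⥤ T), f ⋙ q₀ = g ⋙ q →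
      ∃! d : P ⥤ T, i₀ ⋙ d = q₀ ∧ i ⋙ d = q)
    {T : Cat.{0, 0}} {d₁ d₂ : P ⥤ T} (h₀ : i₀ ⋙ d₁ = i₀ ⋙ d₂) (h : i ⋙ d₁ = i ⋙ d₂) :
    d₁ = d₂ :=
  (huniv T (i₀ ⋙ d₂) (i ⋙ d₂) (congrArg (· ⋙ d₂) hcomm)).unique ⟨h₀, h⟩ ⟨rfl, rfl⟩

end Pushout

theorem eq_id_of_id_eq_eqToHom_comp_comp {C : Type*} [Category C] {x y : C} (p : x = y)
    (q : y = x) (m : y ⟶ y) (h : 𝟙 x = eqToHom p ≫ m ≫ eqToHom q) : m = 𝟙 y := by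
  subst p
  simpa using h.symm

section FreeMonoidEnd

variable {C : Type*} [Category C] {X : C} {M : Type*} [Monoid M] {α : Type*}

theorem map_comp_comp (φ : End X →* M) (u a v : X ⟶ X) :
    φ (u ≫ a ≫ v) = φ v * φ a * φ u := by
  rw [← map_mul, ← map_mul]
  rfl

theorem length_le_of_eq_comp_comp (φ : End X →* FreeMonoid α) {a b u v : X ⟶ X}
    (h : b = u ≫ a ≫ v) : (φ a).length ≤ (φ b).length := by
  rw [h, map_comp_comp, FreeMonoid.length_mul, FreeMonoid.length_mul]
  omega

theorem eq_id_of_eq_comp_comp {φ : End X →* FreeMonoid α} (hφ : Function.Injective φ)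
    {a b u v : X ⟶ X} (h : b = u ≫ a ≫ v) (hlen : (φ b).length ≤ (φ a).length) :
    u = 𝟙 X ∧ v = 𝟙 X ∧ b = a := by
  rw [h, map_comp_comp, FreeMonoid.length_mul, FreeMonoid.length_mul] at hlen
  have hu : φ u = φ 1 := by rw [map_one, ← FreeMonoid.length_eq_zero]; omega
  have hv : φ v = φ 1 := by rw [map_one, ← FreeMonoid.length_eq_zero]; omega
  obtain ⟨rfl, rfl⟩ : u = 𝟙 X ∧ v = 𝟙 X := ⟨hφ hu, hφ hv⟩
  exact ⟨rfl, rfl, by rw [h, Category.id_comp, Category.comp_id]⟩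

def endHom (d : C ⥤ SingleObj M) (X : C) : End X →* M :=
  (SingleObj.toEnd M).symm.toMonoidHom.comp (d.mapEnd X)

theorem endHom_injective (d : C ⥤ SingleObj M) [d.Faithful] (X : C) :
    Function.Injective (endHom d X) :=
  (SingleObj.toEnd M).symm.injective.comp d.map_injective

end FreeMonoidEnd

section FreeModel

open Classical in
noncomputable def toFreeMonoid : Paths (SingleObj G) ⥤ SingleObj (FreeMonoid {g : G // g ≠ 1}) :=
  Paths.lift
    { obj := fun _ => SingleObj.star _
      map := fun {_ _} (g : G) =>
        (if hg : g = 1 then 1 else FreeMonoid.of ⟨g, hg⟩ : FreeMonoid {g : G // g ≠ 1}) }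

theorem toFreeMonoid_map_one :
    (toFreeMonoid G).map ((Paths.of (SingleObj G)).map (SingleObj.toEnd G 1)) = 𝟙 _ :=
  (Paths.lift_toPath _ _).trans (dif_pos rfl)

theorem toFreeMonoid_map_of_ne_one {g : G} (hg : g ≠ 1) :
    (toFreeMonoid G).map ((Paths.of (SingleObj G)).map (SingleObj.toEnd G g)) =
      (FreeMonoid.of ⟨g, hg⟩ : FreeMonoid {g : G // g ≠ 1}) :=
  (Paths.lift_toPath _ _).trans (dif_neg hg)

theorem pathComposition_comp_const :
    pathComposition (Discrete PUnit.{1}) ⋙ (Functor.const _).obj (SingleObj.star _) =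
      freeMap (cG G) ⋙ toFreeMonoid G := by
  refine Paths.ext_functor rfl fun _ _ _ => ?_
  simp only [eqToHom_refl, Category.id_comp, Category.comp_id]
  exact (toFreeMonoid_map_one G).symm

variable {G} {i₀ : Discrete PUnit.{1} ⥤ Fs} {i : Paths (SingleObj G) ⥤ Fs}

def fromFreeMonoid (i : Paths (SingleObj G) ⥤ Fs) :
    SingleObj (FreeMonoid {g : G // g ≠ 1}) ⥤ Fs :=
  SingleObj.functor (FreeMonoid.lift fun s => (freeArrow G i s.1 : End _))

theorem freeArrow_one (hcomm : pathComposition (Discrete PUnit.{1}) ⋙ i₀ = freeMap (cG G) ⋙ i) :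
    freeArrow G i 1 = 𝟙 _ := by
  let e := (Paths.of _).map (𝟙 (⟨PUnit.unit⟩ : Discrete PUnit.{1}))
  have h := Functor.congr_hom hcomm e
  have h₀ : (pathComposition (Discrete PUnit.{1}) ⋙ i₀).map e = 𝟙 _ := by
    change i₀.map (composePath (Quiver.Hom.toPath _)) = _
    rw [composePath_toPath, i₀.map_id]
    rfl
  have h₁ : (freeMap (cG G) ⋙ i).map e = freeArrow G i 1 := rfl
  rw [h₀, h₁] at h
  exact eq_id_of_id_eq_eqToHom_comp_comp _ _ _ h

theorem fromFreeMonoid_map_toFreeMonoid_map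
    (hcomm : pathComposition (Discrete PUnit.{1}) ⋙ i₀ = freeMap (cG G) ⋙ i) (g : G) :
    (fromFreeMonoid i).map ((toFreeMonoid G).map ((Paths.of _).map (SingleObj.toEnd G g))) =
      freeArrow G i g := by
  by_cases hg : g = 1
  · subst hg
    rw [freeArrow_one hcomm, toFreeMonoid_map_one]
    exact (fromFreeMonoid i).map_id _
  · rw [toFreeMonoid_map_of_ne_one G hg]
    rfl

theorem toFreeMonoid_comp_fromFreeMonoid
    (hcomm : pathComposition (Discrete PUnit.{1}) ⋙ i₀ = freeMap (cG G) ⋙ i) :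
    toFreeMonoid G ⋙ fromFreeMonoid i = i := by
  refine Paths.ext_functor rfl fun _ _ g => ?_
  change (fromFreeMonoid i).map ((toFreeMonoid G).map ((Paths.of _).map (SingleObj.toEnd G g))) =
    𝟙 _ ≫ freeArrow G i g ≫ 𝟙 _
  rw [Category.id_comp, Category.comp_id]
  exact fromFreeMonoid_map_toFreeMonoid_map hcomm g

theorem const_comp_fromFreeMonoid
    (hcomm : pathComposition (Discrete PUnit.{1}) ⋙ i₀ = freeMap (cG G) ⋙ i) :
    (Functor.const (Discrete PUnit.{1})).obj (SingleObj.star _) ⋙ fromFreeMonoid i = i₀ := by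
  refine CategoryTheory.Functor.ext (fun x => (Functor.congr_obj hcomm ((Paths.of _).obj x)).symm)
    fun x y f => ?_
  obtain rfl : x = y := Subsingleton.elim _ _
  obtain rfl : f = 𝟙 x := Subsingleton.elim _ _
  rw [CategoryTheory.Functor.map_id, i₀.map_id, Category.id_comp]
  exact ((eqToHom_trans _ _).trans (eqToHom_refl _ _)).symm

theorem endHom_freeArrow {d : Fs ⥤ SingleObj (FreeMonoid {g : G // g ≠ 1})}
    (hd : i ⋙ d = toFreeMonoid G) {g : G} (hg : g ≠ 1) :
    endHom d _ (freeArrow G i g) = FreeMonoid.of ⟨g, hg⟩ := by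
  change (show FreeMonoid _ from (i ⋙ d).map ((Paths.of _).map (SingleObj.toEnd G g))) = _
  rw [hd]
  exact toFreeMonoid_map_of_ne_one G hg

theorem freeObj_hom_eq_id {d : Fs ⥤ SingleObj (FreeMonoid {g : G // g ≠ 1})} [d.Faithful]
    (hd : i ⋙ d = toFreeMonoid G) {g h : G} (hg : g ≠ 1) (hh : h ≠ 1)
    (t : freeObj G i₀ i g ⟶ freeObj G i₀ i h) : t.hom.u = 𝟙 _ ∧ t.hom.v = 𝟙 _ ∧ g = h := by
  obtain ⟨hu, hv, hw⟩ := eq_id_of_eq_comp_comp (a := freeArrow G i g) (b := freeArrow G i h)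
    (endHom_injective d _) t.hom.w
    (by rw [endHom_freeArrow hd hg, endHom_freeArrow hd hh]; rfl)
  have hgh := congrArg (endHom d _) hw
  rw [endHom_freeArrow hd hg, endHom_freeArrow hd hh] at hgh
  exact ⟨hu, hv, (congrArg Subtype.val (FreeMonoid.of_injective hgh)).symm⟩

end FreeModel

/-- Let `G` be a group regarded as a one-object category and `g`, `h`
non-identity elements of `G`.  In `D_G`: (i) if `g ≠ h` there are no morphisms `[g] ⟶ [h]`;
(ii) the only endomorphism of `[g]` is the identity; (iii) there are no morphisms from `[g]`
to the identity object; (iv) the only endomorphism of the identity object is the identity. -/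
theorem DG_hom_structure
    (i₀ : Discrete PUnit.{1} ⥤ Fs) (i : Paths (SingleObj G) ⥤ Fs)
    (hcomm : pathComposition (Discrete PUnit.{1}) ⋙ i₀ = freeMap (cG G) ⋙ i)
    (huniv : ∀ (T : Cat.{0, 0}) (q₀ : Discrete PUnit.{1} ⥤ T) (q : Paths (SingleObj G) ⥤ T),
      pathComposition (Discrete PUnit.{1}) ⋙ q₀ = freeMap (cG G) ⋙ q →
      ∃! d : Fs ⥤ T, i₀ ⋙ d = q₀ ∧ i ⋙ d = q) :
    (∀ (g h : G), g ≠ 1 → h ≠ 1 → g ≠ h →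
      IsEmpty (freeObj G i₀ i g ⟶ freeObj G i₀ i h)) ∧
    (∀ (g : G), g ≠ 1 → ∀ t : freeObj G i₀ i g ⟶ freeObj G i₀ i g, t = 𝟙 _) ∧
    (∀ (g : G), g ≠ 1 → IsEmpty (freeObj G i₀ i g ⟶ idObj G i₀ i)) ∧
    (∀ t : idObj G i₀ i ⟶ idObj G i₀ i, t = 𝟙 _) := by
  obtain ⟨d, ⟨hd₀, hd⟩, -⟩ : ∃! d : Fs ⥤ SingleObj (FreeMonoid {g : G // g ≠ 1}),
      i₀ ⋙ d = (Functor.const _).obj (SingleObj.star _) ∧ i ⋙ d = toFreeMonoid G :=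
    huniv (Cat.of (SingleObj (FreeMonoid {g : G // g ≠ 1}))) _ _ (pathComposition_comp_const G)
  have hde : d ⋙ fromFreeMonoid i = 𝟭 Fs :=
    pushout_functor_ext (T := Cat.of Fs) hcomm huniv
      ((congrArg (· ⋙ fromFreeMonoid i) hd₀).trans (const_comp_fromFreeMonoid hcomm))
      ((congrArg (· ⋙ fromFreeMonoid i) hd).trans (toFreeMonoid_comp_fromFreeMonoid hcomm))
  have : d.Faithful := Functor.Faithful.of_comp_eq hde
  have hφ := endHom_injective d (i.obj ((Paths.of (SingleObj G)).obj (SingleObj.star G)))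
  refine ⟨fun g h hg hh hne => ⟨fun t => hne (freeObj_hom_eq_id hd hg hh t).2.2⟩, fun g hg t => ?_,
    fun g hg => ⟨fun t => ?_⟩, fun t => ?_⟩
  · obtain ⟨hu, hv, -⟩ := freeObj_hom_eq_id hd hg hg t
    exact InducedCategory.hom_ext (TwHom.ext hu hv)
  · have := length_le_of_eq_comp_comp (endHom d _) (a := freeArrow G i g)
      (b := (1 : End _)) t.hom.w
    rw [endHom_freeArrow hd hg, map_one] at this
    simp at this
  · obtain ⟨hu, hv, -⟩ := eq_id_of_eq_comp_comp hφ t.hom.w le_rfl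
    exact InducedCategory.hom_ext (TwHom.ext hu hv)

end Unrolling
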